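/- arXiv:0904.1028 — 6 statements merged into one kernel-verified Lean document; each statement's English description precedes it below -/
import Mathlib

section
/- Let p be a prime, α, β ∈ ℂ ∖ {0} with α ≠ β, and s′ ∈ ℂ with |α| < p^{Re(s′)} and |β| < p^{Re(s′)}. Then the function y ↦ |y|^{s′} · W_{α,β}(y) is integrable on ℚ_pˣ with respect to ν, and ∫_{ℚ_pˣ} |y|^{s′} W_{α,β}(y) dν(y) = 1 / ((1 − α p^{−s′})(1 − β p^{−s′})). (This is the local Mellin transform of the spherical Whittaker function, equal to the local L-factor L_v(s′ + 1/2, F).) -/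
open MeasureTheory

open Classical in
/-- The spherical Whittaker function on `ℚ_p` with Satake parameters `α, β`:
`W(y) = (α^{n+1} − β^{n+1})/(α − β)` if `y ≠ 0` and `n = v_p(y) ≥ 0`, and `0` otherwise. -/
noncomputable def sphericalWhittaker (p : ℕ) [Fact p.Prime] (α β : ℂ) (y : ℚ_[p]) : ℂ :=
  if y ≠ 0 ∧ 0 ≤ y.valuation then
    (α ^ (y.valuation + 1) - β ^ (y.valuation + 1)) / (α - β)
  else 0

/-!
On the shell `‖y‖ = p^{-n}` (`n ≥ 0`) the integrand is the constant
`p^{-ns'} (α^{n+1} − β^{n+1})/(α − β)`, and the integrand vanishes off these shells. Each shell is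
`p^n ℤ_pˣ`, so it has `ν`-mass `1` by multiplicative invariance. Hence the integral is the power
series `∑ₙ hₙ(α, β) xⁿ` at `x = p^{-s'}`, where `hₙ(α, β) = (α^{n+1} − β^{n+1})/(α − β)`; writing
`hₙ(α, β) xⁿ = (α (αx)ⁿ − β (βx)ⁿ)/(α − β)` splits it into two convergent geometric series with
sum `1/((1 − αx)(1 − βx))`.
-/

section ShellDecomposition

variable {X E ι : Type*} [MeasurableSpace X] [NormedAddCommGroup E]
  [Countable ι] {μ : Measure X} {S : ι → Set X} {f : X → E} {c : ι → E}

theorem integrable_of_eqOn_const_of_measure_eq_one (hS : ∀ i, MeasurableSet (S i))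
    (hμ : ∀ i, μ (S i) = 1) (hf : ∀ i, Set.EqOn f (fun _ => c i) (S i))
    (hf_zero : ∀ x ∉ ⋃ i, S i, f x = 0) (hc : Summable fun i => ‖c i‖) :
    Integrable f μ := by
  have hS_int : ∀ i, IntegrableOn f (S i) μ := fun i =>
    (integrableOn_const (by simp [hμ i])).congr_fun (hf i).symm (hS i)
  have hS_norm : ∀ i, ∫ x in S i, ‖f x‖ ∂μ = ‖c i‖ := fun i => by
    rw [setIntegral_congr_fun (hS i) fun x hx => congrArg norm (hf i hx), setIntegral_const,
      measureReal_def, hμ i]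
    simp
  refine (integrableOn_iUnion_of_summable_integral_norm hS_int ?_)
    |>.integrable_of_forall_notMem_eq_zero hf_zero
  simpa only [hS_norm] using hc

theorem hasSum_integral_of_eqOn_const_of_measure_eq_one [NormedSpace ℝ E] [CompleteSpace E]
    (hS : ∀ i, MeasurableSet (S i)) (hS_disj : Pairwise (Function.onFun Disjoint S))
    (hμ : ∀ i, μ (S i) = 1) (hf : ∀ i, Set.EqOn f (fun _ => c i) (S i))
    (hf_zero : ∀ x ∉ ⋃ i, S i, f x = 0) (hc : Summable fun i => ‖c i‖) :
    HasSum c (∫ x, f x ∂μ) := by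
  have hf_int := integrable_of_eqOn_const_of_measure_eq_one hS hμ hf hf_zero hc
  have hS_int : ∀ i, ∫ x in S i, f x ∂μ = c i := fun i => by
    rw [setIntegral_congr_fun (hS i) (hf i), setIntegral_const, measureReal_def, hμ i]
    simp
  rw [← setIntegral_eq_integral_of_forall_compl_eq_zero hf_zero]
  simpa only [hS_int] using hasSum_integral_iUnion hS hS_disj hf_int.integrableOn

end ShellDecomposition

theorem hasSum_pow_mul_pow_succ_sub_pow_succ_div_sub {𝕜 : Type*} [NormedField 𝕜]
    [CompleteSpace 𝕜] {α β x : 𝕜} (hαβ : α ≠ β) (hα : ‖α * x‖ < 1) (hβ : ‖β * x‖ < 1) :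
    HasSum (fun n : ℕ => x ^ n * ((α ^ (n + 1) - β ^ (n + 1)) / (α - β)))
      (1 / ((1 - α * x) * (1 - β * x))) := by
  have hαβ' : α - β ≠ 0 := sub_ne_zero.mpr hαβ
  have h1α : 1 - α * x ≠ 0 := sub_ne_zero.mpr fun h => by simp [← h] at hα
  have h1β : 1 - β * x ≠ 0 := sub_ne_zero.mpr fun h => by simp [← h] at hβ
  have := (((hasSum_geometric_of_norm_lt_one hα).mul_left α).sub
    ((hasSum_geometric_of_norm_lt_one hβ).mul_left β)).div_const (α - β)
  convert this using 1
  · ext n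
    ring
  · have h1β' : 1 - x * β ≠ 0 := by rwa [mul_comm]
    field_simp
    ring

theorem Complex.ofReal_zpow_neg_cpow {x : ℝ} (hx : 0 < x) (n : ℕ) (s : ℂ) :
    (((x ^ (-(n : ℤ)) : ℝ)) : ℂ) ^ s = ((x : ℂ) ^ (-s)) ^ n := by
  rw [← Complex.cpow_nat_mul, ← Real.rpow_intCast, Complex.ofReal_cpow hx.le,
    ← Complex.cpow_mul]
  · push_cast; ring_nf
  all_goals simp [← Complex.ofReal_log hx.le, Real.pi_pos, Real.pi_pos.le]

theorem Metric.pairwise_disjoint_sphere {X ι : Type*} [PseudoMetricSpace X] (x : X)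
    {r : ι → ℝ} (hr : Function.Injective r) :
    Pairwise (Function.onFun Disjoint fun i => Metric.sphere x (r i)) :=
  fun _ _ hij => Set.disjoint_left.mpr fun _ hi hj =>
    hij (hr ((Metric.mem_sphere.mp hi).symm.trans (Metric.mem_sphere.mp hj)))

section Whittaker

variable {p : ℕ} [Fact p.Prime]

namespace Padic

theorem valuation_eq_of_norm_eq {y : ℚ_[p]} {n : ℤ} (hy : ‖y‖ = (p : ℝ) ^ (-n)) :
    y ≠ 0 ∧ y.valuation = n := by
  have hp : (1 : ℝ) < p := mod_cast (Fact.out : p.Prime).one_lt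
  have hy0 : y ≠ 0 := norm_pos_iff.mp (hy ▸ zpow_pos (by positivity) _)
  refine ⟨hy0, neg_injective ((zpow_right_inj₀ (by positivity) hp.ne').mp ?_)⟩
  rw [← norm_eq_zpow_neg_valuation hy0, hy]

theorem measure_sphere_zpow_neg_eq [MeasurableSpace ℚ_[p]] [BorelSpace ℚ_[p]]
    (ν : Measure ℚ_[p]) (n : ℕ) (hν : Measure.map (fun x => (p : ℚ_[p]) ^ n * x) ν = ν) :
    ν (Metric.sphere 0 ((p : ℝ) ^ (-(n : ℤ)))) = ν {y | ‖y‖ = 1} := by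
  conv_lhs => rw [← hν]
  rw [Measure.map_apply (continuous_const_mul _).measurable
    Metric.isClosed_sphere.measurableSet]
  congr 1
  ext x
  have hpn : ((p : ℝ) ^ n)⁻¹ ≠ 0 := by simp [(Fact.out : p.Prime).ne_zero]
  simp [norm_mul, zpow_neg, mul_eq_left₀ hpn]

end Padic

theorem sphericalWhittaker_of_norm_eq (α β : ℂ) {y : ℚ_[p]} {n : ℕ}
    (hy : ‖y‖ = (p : ℝ) ^ (-(n : ℤ))) :
    sphericalWhittaker p α β y = (α ^ (n + 1) - β ^ (n + 1)) / (α - β) := by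
  obtain ⟨hy0, hv⟩ := Padic.valuation_eq_of_norm_eq hy
  rw [sphericalWhittaker, if_pos ⟨hy0, hv ▸ n.cast_nonneg⟩, hv]
  norm_cast

theorem sphericalWhittaker_eq_zero_of_forall_norm_ne (α β : ℂ) {y : ℚ_[p]}
    (hy : ∀ n : ℕ, ‖y‖ ≠ (p : ℝ) ^ (-(n : ℤ))) : sphericalWhittaker p α β y = 0 := by
  refine if_neg fun ⟨hy0, hv⟩ => hy y.valuation.toNat ?_
  rw [Int.toNat_of_nonneg hv, Padic.norm_eq_zpow_neg_valuation hy0]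

theorem cpow_norm_mul_sphericalWhittaker_of_norm_eq (α β s : ℂ) {y : ℚ_[p]} {n : ℕ}
    (hy : ‖y‖ = (p : ℝ) ^ (-(n : ℤ))) :
    (‖y‖ : ℂ) ^ s * sphericalWhittaker p α β y =
      ((p : ℂ) ^ (-s)) ^ n * ((α ^ (n + 1) - β ^ (n + 1)) / (α - β)) := by
  have hp : (0 : ℝ) < p := mod_cast (Fact.out : p.Prime).pos
  rw [sphericalWhittaker_of_norm_eq α β hy, hy, Complex.ofReal_zpow_neg_cpow hp,
    Complex.ofReal_natCast]

end Whittaker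

theorem norm_mul_natCast_cpow_neg_lt_one {n : ℕ} (hn : 0 < n) {γ s : ℂ}
    (hγ : ‖γ‖ < (n : ℝ) ^ s.re) : ‖γ * (n : ℂ) ^ (-s)‖ < 1 := by
  rw [norm_mul, Complex.norm_natCast_cpow_of_pos hn, Complex.neg_re,
    Real.rpow_neg (by positivity), ← div_eq_mul_inv, div_lt_one (by positivity)]
  exact hγ

theorem stmt_1_general (p : ℕ) [Fact p.Prime] [MeasurableSpace ℚ_[p]] [BorelSpace ℚ_[p]]
    (ν : Measure ℚ_[p])
    (hν_inv : ∀ a : ℚ_[p], a ≠ 0 → Measure.map (fun x => a * x) ν = ν)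
    (hν_units : ν {y : ℚ_[p] | ‖y‖ = 1} = 1)
    (α β : ℂ) (hαβ : α ≠ β)
    (s' : ℂ) (hαs : ‖α‖ < (p : ℝ) ^ s'.re) (hβs : ‖β‖ < (p : ℝ) ^ s'.re) :
    Integrable (fun y : ℚ_[p] => (‖y‖ : ℂ) ^ s' * sphericalWhittaker p α β y) ν ∧
    ∫ y : ℚ_[p], (‖y‖ : ℂ) ^ s' * sphericalWhittaker p α β y ∂ν =
      1 / ((1 - α * (p : ℂ) ^ (-s')) * (1 - β * (p : ℂ) ^ (-s'))) := by
  have hp_pos : 0 < p := (Fact.out : p.Prime).pos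
  have hp : (1 : ℝ) < p := mod_cast (Fact.out : p.Prime).one_lt
  set S : ℕ → Set ℚ_[p] := fun n => Metric.sphere 0 ((p : ℝ) ^ (-(n : ℤ)))
  have hS_meas : ∀ n, MeasurableSet (S n) := fun n => Metric.isClosed_sphere.measurableSet
  have hS_disj : Pairwise (Function.onFun Disjoint S) :=
    Metric.pairwise_disjoint_sphere 0 <| (zpow_right_injective₀ (by positivity) hp.ne').comp
      (neg_injective.comp Nat.cast_injective)
  have hS_mass : ∀ n, ν (S n) = 1 := fun n => by
    rw [Padic.measure_sphere_zpow_neg_eq ν n (hν_inv _ (by simp [hp_pos.ne'])), hν_units]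
  have hf_S : ∀ n, Set.EqOn (fun y : ℚ_[p] => (‖y‖ : ℂ) ^ s' * sphericalWhittaker p α β y)
      (fun _ => ((p : ℂ) ^ (-s')) ^ n * ((α ^ (n + 1) - β ^ (n + 1)) / (α - β))) (S n) :=
    fun _ _ hy => cpow_norm_mul_sphericalWhittaker_of_norm_eq α β s'
      (mem_sphere_zero_iff_norm.mp hy)
  have hf_zero : ∀ y ∉ ⋃ n, S n, (‖y‖ : ℂ) ^ s' * sphericalWhittaker p α β y = 0 := by
    intro y hy
    rw [sphericalWhittaker_eq_zero_of_forall_norm_ne α β fun n hn => hy ?_, mul_zero]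
    exact Set.mem_iUnion.mpr ⟨n, mem_sphere_zero_iff_norm.mpr hn⟩
  have h_sum := hasSum_pow_mul_pow_succ_sub_pow_succ_div_sub hαβ
    (norm_mul_natCast_cpow_neg_lt_one hp_pos hαs) (norm_mul_natCast_cpow_neg_lt_one hp_pos hβs)
  have h_norm_sum := summable_norm_iff.mpr h_sum.summable
  exact ⟨integrable_of_eqOn_const_of_measure_eq_one hS_meas hS_mass hf_S hf_zero h_norm_sum,
    (hasSum_integral_of_eqOn_const_of_measure_eq_one hS_meas hS_disj hS_mass hf_S hf_zero
      h_norm_sum).unique h_sum⟩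

/-- **Local Mellin transform of the spherical Whittaker function.**
Let `ν` be a Haar measure on `ℚ_pˣ` (multiplication-invariant, vanishing at `0`, giving
`ℤ_pˣ` mass `1`). For nonzero `α ≠ β` with `|α|, |β| < p^{Re s′}`, the function
`y ↦ |y|^{s′} W_{α,β}(y)` is `ν`-integrable and its integral is
`1/((1 − α p^{−s′})(1 − β p^{−s′}))`, the local `L`-factor `L_v(s′ + 1/2, F)`. -/
theorem stmt_1 (p : ℕ) [Fact p.Prime] [MeasurableSpace ℚ_[p]] [BorelSpace ℚ_[p]]
    (ν : Measure ℚ_[p])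
    (hν_inv : ∀ a : ℚ_[p], a ≠ 0 → Measure.map (fun x => a * x) ν = ν)
    (hν_zero : ν {0} = 0)
    (hν_units : ν {y : ℚ_[p] | ‖y‖ = 1} = 1)
    (α β : ℂ) (hα : α ≠ 0) (hβ : β ≠ 0) (hαβ : α ≠ β)
    (s' : ℂ) (hαs : ‖α‖ < (p : ℝ) ^ s'.re) (hβs : ‖β‖ < (p : ℝ) ^ s'.re) :
    Integrable (fun y : ℚ_[p] => (‖y‖ : ℂ) ^ s' * sphericalWhittaker p α β y) ν ∧
    ∫ y : ℚ_[p], (‖y‖ : ℂ) ^ s' * sphericalWhittaker p α β y ∂ν =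
      1 / ((1 - α * (p : ℂ) ^ (-s')) * (1 - β * (p : ℂ) ^ (-s'))) :=
  stmt_1_general p ν hν_inv hν_units α β hαβ s' hαs hβs
end

section
/- Let q > 1 be a real number, α, β ∈ ℂ ∖ {0} with α ≠ β, and s′, w′ ∈ ℂ such that |α q^{−s′}| < 1, |β q^{−s′}| < 1, |α^{−1} q^{1−w′+s′}| < 1 and |β^{−1} q^{1−w′+s′}| < 1. Then the double series ((q−1)/q) · ∑_{m=1}^∞ q^{m(1−w′)} · ∑_{n=−m}^∞ q^{−n s′} (α^{n+1} − β^{n+1})/(α − β) converges and equals (q−1) · (q^{−w′} − q^{1−2w′+2s′}/(αβ)) / ((1 − α q^{−s′})(1 − β q^{−s′})(1 − α^{−1} q^{1−w′+s′})(1 − β^{−1} q^{1−w′+s′})). -/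
/-- The inner summand of the tail Mellin sum of spherical Whittaker values at the place `v₁`:
for outer index `m ≥ 1`, the inner variable `n = k − m` (`k ∈ ℕ`) runs over `n ≥ −m`, and the
term is `q^{−n s′} · (α^{n+1} − β^{n+1})/(α − β)`, where `q^z := exp(z log q)`. -/
noncomputable def innerMellinTerm (q : ℝ) (α β s' : ℂ) (m : ℤ) (k : ℕ) : ℂ :=
  (q : ℂ) ^ (((-((k : ℤ) - m) : ℤ) : ℂ) * s') *
    ((α ^ ((k : ℤ) - m + 1) - β ^ ((k : ℤ) - m + 1)) / (α - β))

/-!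
With `x = q^{-s'}` and `y = q^{1-w'+s'}` (so `q^{1-w'} = xy`), the inner term splits as
`(α (αx)^n - β (βx)^n) / (α - β)`; each half is a geometric series in `γx` (`γ = α, β`)
shifted to start at `n = -m`, with sum `γ (γx)^{-m} / (1 - γx)`. Multiplying by `(xy)^m` turns
the outer series into geometric series in `γ⁻¹y`, and partial fractions give the closed form.
-/

open Complex

theorem one_sub_ne_zero_of_norm_lt_one {R : Type*} [NormedRing R] [NormOneClass R] {z : R}
    (h : ‖z‖ < 1) : 1 - z ≠ 0 :=
  sub_ne_zero.mpr fun h' => by simp [← h'] at h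

theorem tail_mellin_partial_fractions {K : Type*} [Field K] {x y α β : K} (hα : α ≠ 0)
    (hβ : β ≠ 0) (hαβ : α - β ≠ 0) (h1 : 1 - α * x ≠ 0) (h2 : 1 - β * x ≠ 0)
    (h3 : 1 - α⁻¹ * y ≠ 0) (h4 : 1 - β⁻¹ * y ≠ 0) :
    (α / (1 - α * x) * (α⁻¹ * y / (1 - α⁻¹ * y)) -
        β / (1 - β * x) * (β⁻¹ * y / (1 - β⁻¹ * y))) / (α - β) =
      (x * y - y ^ 2 / (α * β)) /
        ((1 - α * x) * (1 - β * x) * (1 - α⁻¹ * y) * (1 - β⁻¹ * y)) := by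
  have hnum : (1 - β * x) * (1 - β⁻¹ * y) - (1 - α * x) * (1 - α⁻¹ * y) =
      (α - β) * (x - y / (α * β)) := by
    field_simp
    ring
  have cancel : ∀ γ : K, γ ≠ 0 → γ / (1 - γ * x) * (γ⁻¹ * y / (1 - γ⁻¹ * y)) =
      y / ((1 - γ * x) * (1 - γ⁻¹ * y)) := fun γ hγ => by
    rw [div_mul_div_comm, ← mul_assoc, mul_inv_cancel₀ hγ, one_mul]
  rw [cancel α hα, cancel β hβ, div_sub_div _ _ (mul_ne_zero h1 h3) (mul_ne_zero h2 h4), div_div,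
    div_eq_div_iff (by simp [*]) (by simp [*])]
  linear_combination y * ((1 - α * x) * (1 - β * x) * (1 - α⁻¹ * y) * (1 - β⁻¹ * y)) * hnum


section TailSums

variable {K : Type*} [NormedField K]

theorem hasSum_zpow_mul_zpow_tail {x γ : K} (hx : x ≠ 0) (hγ : γ ≠ 0) (h : ‖γ * x‖ < 1)
    (m : ℤ) :
    HasSum (fun k : ℕ => x ^ ((k : ℤ) - m) * γ ^ ((k : ℤ) - m + 1))
      (γ * (γ * x) ^ (-m) / (1 - γ * x)) := by
  rw [div_eq_mul_inv]
  refine ((hasSum_geometric_of_norm_lt_one h).mul_left (γ * (γ * x) ^ (-m))).congr_fun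
    fun k => ?_
  rw [zpow_add_one₀ hγ, mul_assoc, ← zpow_natCast (γ * x) k,
    ← zpow_add₀ (mul_ne_zero hγ hx), mul_zpow, neg_add_eq_sub]
  ring

theorem hasSum_tail_mellin {x α β : K} (hx : x ≠ 0) (hα : α ≠ 0) (hβ : β ≠ 0)
    (h1 : ‖α * x‖ < 1) (h2 : ‖β * x‖ < 1) (m : ℤ) :
    HasSum (fun k : ℕ => x ^ ((k : ℤ) - m) *
        ((α ^ ((k : ℤ) - m + 1) - β ^ ((k : ℤ) - m + 1)) / (α - β)))
      ((α * (α * x) ^ (-m) / (1 - α * x) - β * (β * x) ^ (-m) / (1 - β * x)) / (α - β)) :=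
  (((hasSum_zpow_mul_zpow_tail hx hα h1 m).sub
    (hasSum_zpow_mul_zpow_tail hx hβ h2 m)).div_const (α - β)).congr_fun fun k => by ring

theorem hasSum_pow_succ_mul_tail {x y γ : K} (hx : x ≠ 0) (hγ : γ ≠ 0) (h : ‖γ⁻¹ * y‖ < 1) :
    HasSum (fun m : ℕ => (x * y) ^ (m + 1) * (γ * (γ * x) ^ (-((m : ℤ) + 1)) / (1 - γ * x)))
      (γ / (1 - γ * x) * (γ⁻¹ * y / (1 - γ⁻¹ * y))) := by
  rw [div_eq_mul_inv (γ⁻¹ * y), ← mul_assoc]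
  refine ((hasSum_geometric_of_norm_lt_one h).mul_left _).congr_fun fun m => ?_
  rw [← Nat.cast_add_one, zpow_neg, zpow_natCast, mul_assoc, ← pow_succ']
  simp only [mul_pow, inv_pow]
  field_simp

theorem hasSum_pow_succ_mul_tsum_tail_mellin {x y α β : K} (hx : x ≠ 0) (hα : α ≠ 0)
    (hβ : β ≠ 0) (hαβ : α ≠ β) (h1 : ‖α * x‖ < 1) (h2 : ‖β * x‖ < 1)
    (h3 : ‖α⁻¹ * y‖ < 1) (h4 : ‖β⁻¹ * y‖ < 1) :
    HasSum (fun m : ℕ => (x * y) ^ (m + 1) * ∑' k : ℕ, x ^ ((k : ℤ) - (m + 1)) *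
        ((α ^ ((k : ℤ) - (m + 1) + 1) - β ^ ((k : ℤ) - (m + 1) + 1)) / (α - β)))
      ((x * y - y ^ 2 / (α * β)) /
        ((1 - α * x) * (1 - β * x) * (1 - α⁻¹ * y) * (1 - β⁻¹ * y))) := by
  rw [← tail_mellin_partial_fractions hα hβ (sub_ne_zero.mpr hαβ)
    (one_sub_ne_zero_of_norm_lt_one h1) (one_sub_ne_zero_of_norm_lt_one h2)
    (one_sub_ne_zero_of_norm_lt_one h3) (one_sub_ne_zero_of_norm_lt_one h4)]
  refine (((hasSum_pow_succ_mul_tail hx hα h3).sub (hasSum_pow_succ_mul_tail hx hβ h4)).div_const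
    (α - β)).congr_fun fun m => ?_
  rw [(hasSum_tail_mellin hx hα hβ h1 h2 _).tsum_eq]
  ring

end TailSums

theorem innerMellinTerm_eq (q : ℝ) (α β s' : ℂ) (m : ℤ) (k : ℕ) :
    innerMellinTerm q α β s' m k = ((q : ℂ) ^ (-s')) ^ ((k : ℤ) - m) *
      ((α ^ ((k : ℤ) - m + 1) - β ^ ((k : ℤ) - m + 1)) / (α - β)) := by
  rw [innerMellinTerm, cpow_int_mul, cpow_neg, inv_zpow']

/-- **Tail Mellin sums in the cuspidal component at `v₁`.**
For real `q > 1`, nonzero `α ≠ β` in `ℂ`, and `s′, w′ ∈ ℂ` with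
`|α q^{−s′}| < 1`, `|β q^{−s′}| < 1`, `|α⁻¹ q^{1−w′+s′}| < 1`, `|β⁻¹ q^{1−w′+s′}| < 1`, the
double series `((q−1)/q) ∑_{m≥1} q^{m(1−w′)} ∑_{n≥−m} q^{−n s′} (α^{n+1} − β^{n+1})/(α − β)`
converges and equals
`(q−1)(q^{−w′} − q^{1−2w′+2s′}/(αβ)) /
  ((1 − α q^{−s′})(1 − β q^{−s′})(1 − α⁻¹ q^{1−w′+s′})(1 − β⁻¹ q^{1−w′+s′}))`. -/
theorem stmt_2 (q : ℝ) (hq : 1 < q) (α β : ℂ) (hα : α ≠ 0) (hβ : β ≠ 0) (hαβ : α ≠ β)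
    (s' w' : ℂ)
    (h1 : ‖α * (q : ℂ) ^ (-s')‖ < 1) (h2 : ‖β * (q : ℂ) ^ (-s')‖ < 1)
    (h3 : ‖α⁻¹ * (q : ℂ) ^ (1 - w' + s')‖ < 1) (h4 : ‖β⁻¹ * (q : ℂ) ^ (1 - w' + s')‖ < 1) :
    (∀ m : ℕ, Summable (innerMellinTerm q α β s' ((m : ℤ) + 1))) ∧
    Summable (fun m : ℕ => (q : ℂ) ^ (((m : ℂ) + 1) * (1 - w')) *
      ∑' k : ℕ, innerMellinTerm q α β s' ((m : ℤ) + 1) k) ∧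
    ((q : ℂ) - 1) / (q : ℂ) *
        ∑' m : ℕ, (q : ℂ) ^ (((m : ℂ) + 1) * (1 - w')) *
          ∑' k : ℕ, innerMellinTerm q α β s' ((m : ℤ) + 1) k =
      ((q : ℂ) - 1) * ((q : ℂ) ^ (-w') - (q : ℂ) ^ (1 - 2 * w' + 2 * s') / (α * β)) /
        ((1 - α * (q : ℂ) ^ (-s')) * (1 - β * (q : ℂ) ^ (-s')) *
          (1 - α⁻¹ * (q : ℂ) ^ (1 - w' + s')) * (1 - β⁻¹ * (q : ℂ) ^ (1 - w' + s'))) := by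
  have hQ : (q : ℂ) ≠ 0 := ofReal_ne_zero.mpr (by linarith)
  have hx : (q : ℂ) ^ (-s') ≠ 0 := cpow_ne_zero_iff.mpr (Or.inl hQ)
  have hsplit (a b : ℂ) : (q : ℂ) ^ (a + b - 1) = (q : ℂ) ^ a * (q : ℂ) ^ b / q := by
    rw [cpow_sub _ _ hQ, cpow_add _ _ hQ, cpow_one]
  have hpow (m : ℕ) : (q : ℂ) ^ (((m : ℂ) + 1) * (1 - w')) =
      ((q : ℂ) ^ (-s') * (q : ℂ) ^ (1 - w' + s')) ^ (m + 1) := by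
    rw [← Nat.cast_add_one, cpow_nat_mul, ← cpow_add _ _ hQ]
    ring_nf
  have hS := hasSum_pow_succ_mul_tsum_tail_mellin hx hα hβ hαβ h1 h2 h3 h4
  simp only [funext (innerMellinTerm_eq q α β s' _), hpow]
  refine ⟨fun m => (hasSum_tail_mellin hx hα hβ h1 h2 _).summable, hS.summable, ?_⟩
  rw [hS.tsum_eq, show -w' = -s' + (1 - w' + s') - 1 by ring,
    show 1 - 2 * w' + 2 * s' = (1 - w' + s') + (1 - w' + s') - 1 by ring, hsplit, hsplit]
  ring
end

section
/- Let p be a prime, ψ a standard additive character of ℚ_p, and χ a nontrivial continuous unitary character of ℤ_pˣ with conductor exponent N ≥ 1. Then for every x ∈ ℚ_p with x = 0 or v_p(x) ≠ −N, one has ∫_{ℤ_pˣ} χ(u) ψ(x u) dμ(u) = 0. -/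
/-!
Both cases rest on one principle: if a measure-preserving bijection of `ℤ_pˣ` multiplies the
integrand by a constant `c ≠ 1`, the integral vanishes.  When `|x| ≤ p^(N-1)`, minimality of the
conductor gives `t ≡ 1 mod p^(N-1)` with `χ(t) ≠ 1`; the substitution `u ↦ tu` (which preserves
Haar measure since `|t| = 1`) leaves `ψ(xu)` unchanged and multiplies the integrand by `χ(t)`.
Otherwise `|x| ≥ p^(N+1)` because `v_p(x) ≠ -N`; choosing `x₀` with `|x₀| ≤ p` and `ψ(x₀) ≠ 1`,
the translation `u ↦ u + x₀/x` moves `u` by at most `p^(-N)`, so it fixes `χ(u)` and multiplies the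
integrand by `ψ(x₀)`.
-/

open MeasureTheory Metric

section Ultrametric

variable {S : Type*} [SeminormedAddCommGroup S] [IsUltrametricDist S]

theorem norm_add_eq_right_of_norm_lt {h y : S} (hlt : ‖h‖ < ‖y‖) : ‖h + y‖ = ‖y‖ := by
  rw [IsUltrametricDist.norm_add_eq_max_of_norm_ne_norm hlt.ne, max_eq_right hlt.le]

theorem norm_add_eq_iff_of_norm_lt {h y : S} {r : ℝ} (hlt : ‖h‖ < r) :
    ‖h + y‖ = r ↔ ‖y‖ = r := by
  refine ⟨fun hy => ?_, fun hy => (norm_add_eq_right_of_norm_lt (hy ▸ hlt)).trans hy⟩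
  have h' : ‖-h‖ < ‖h + y‖ := by rwa [norm_neg, hy]
  rw [← hy, ← norm_add_eq_right_of_norm_lt h', neg_add_cancel_left]

end Ultrametric

theorem setIntegral_eq_zero_of_comp_eq_mul {α 𝕜 : Type*} [MeasurableSpace α] [RCLike 𝕜]
    {μ : Measure α} {s : Set α} {f : α → 𝕜} {c : 𝕜} (e : α ≃ᵐ α) (he : MeasurePreserving e μ μ)
    (hs_meas : MeasurableSet s) (hs : e ⁻¹' s = s) (hc : c ≠ 1) (hf : ∀ x ∈ s, f (e x) = c * f x) :
    ∫ x in s, f x ∂μ = 0 := by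
  have hfix : ∫ x in s, f x ∂μ = c * ∫ x in s, f x ∂μ := calc
    ∫ x in s, f x ∂μ = ∫ x in e ⁻¹' s, f (e x) ∂μ :=
      (he.setIntegral_preimage_emb e.measurableEmbedding f s).symm
    _ = ∫ x in s, c * f x ∂μ := by rw [hs]; exact setIntegral_congr_fun hs_meas hf
    _ = c * ∫ x in s, f x ∂μ := integral_const_mul c f
  have : (c - 1) * ∫ x in s, f x ∂μ = 0 := by rw [sub_mul, ← hfix]; ring
  exact (mul_eq_zero.mp this).resolve_left (sub_ne_zero.mpr hc)

section NormedField

variable {K : Type*} [NormedField K] [ProperSpace K] [MeasurableSpace K] [BorelSpace K]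
  {μ : Measure K}

theorem map_mul_left_eq_self_of_norm_eq_one [μ.IsAddLeftInvariant]
    (h0 : μ (closedBall 0 1) ≠ 0) (htop : μ (closedBall 0 1) ≠ ⊤) {t : K} (ht : ‖t‖ = 1) :
    μ.map (t * ·) = μ := by
  have : μ.IsAddHaarMeasure := Measure.isAddHaarMeasure_of_isCompact_nonempty_interior μ _
    (isCompact_closedBall 0 1) ⟨0, mem_interior_iff_mem_nhds.2 (closedBall_mem_nhds 0 one_pos)⟩
    h0 htop
  have ht0 : t ≠ 0 := norm_ne_zero_iff.mp (ht ▸ one_ne_zero)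
  have : (μ.map (t * ·)).IsAddHaarMeasure :=
    (LinearEquiv.smulOfNeZero K K t ht0).toAddEquiv.isAddHaarMeasure_map μ
      (continuous_const_mul t) (continuous_const_mul t⁻¹)
  have hball : μ.map (t * ·) (closedBall 0 1) = μ (closedBall 0 1) := by
    rw [Measure.map_apply (continuous_const_mul t).measurable measurableSet_closedBall]
    congr 1
    ext y
    simp [ht]
  rw [Measure.isAddLeftInvariant_eq_smul (μ.map (t * ·)) μ] at hball ⊢
  rw [Measure.smul_apply, ENNReal.smul_def, smul_eq_mul, ENNReal.mul_eq_right h0 htop] at hball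
  rw [ENNReal.smul_def, hball, one_smul]

end NormedField

namespace Padic

variable {p : ℕ} [Fact p.Prime]

theorem one_lt_prime : (1 : ℝ) < p := by exact_mod_cast (Fact.out : p.Prime).one_lt

theorem prime_pos : (0 : ℝ) < p := zero_lt_one.trans one_lt_prime

theorem norm_eq_one_of_norm_sub_one_lt {u : ℚ_[p]} (hu : ‖u - 1‖ < 1) : ‖u‖ = 1 := by
  simpa using (norm_add_eq_iff_of_norm_lt (y := (1 : ℚ_[p])) hu).mpr norm_one

theorem exists_norm_sub_one_le_apply_ne_one {χ : ℚ_[p] → ℂ} {N : ℕ}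
    (hχ_nontriv : ∃ x : ℚ_[p], ‖x‖ = 1 ∧ χ x ≠ 1)
    (hχ_min : ∀ M : ℕ, 1 ≤ M →
      (∀ x : ℚ_[p], ‖x - 1‖ ≤ (p : ℝ) ^ (-(M : ℤ)) → χ x = 1) → N ≤ M) :
    ∃ t : ℚ_[p], ‖t‖ = 1 ∧ ‖t - 1‖ ≤ (p : ℝ) ^ (1 - (N : ℤ)) ∧ χ t ≠ 1 := by
  rcases le_or_gt N 1 with hN | hN
  · obtain ⟨t, ht, hχt⟩ := hχ_nontriv
    refine ⟨t, ht, ?_, hχt⟩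
    calc ‖t - 1‖ ≤ max ‖t‖ ‖(-1 : ℚ_[p])‖ :=
          sub_eq_add_neg t 1 ▸ IsUltrametricDist.norm_add_le_max t (-1)
      _ = 1 := by rw [ht, norm_neg, norm_one, max_self]
      _ ≤ (p : ℝ) ^ (1 - (N : ℤ)) := one_le_zpow₀ one_lt_prime.le (by omega)
  · by_contra! hχ_triv
    have hsmall : ∀ x : ℚ_[p], ‖x - 1‖ ≤ (p : ℝ) ^ (-((N - 1 : ℕ) : ℤ)) → χ x = 1 := by
      intro x hx
      rw [Nat.cast_sub hN.le, Nat.cast_one, neg_sub] at hx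
      have hx1 : ‖x - 1‖ < 1 := hx.trans_lt (zpow_lt_one_of_neg₀ one_lt_prime (by omega))
      exact hχ_triv x (norm_eq_one_of_norm_sub_one_lt hx1) hx
    have := hχ_min (N - 1) (by omega) hsmall
    omega

theorem apply_add_eq_of_norm_le_conductor {χ : ℚ_[p] → ℂ} {N : ℕ} (hN : 1 ≤ N)
    (hχ_mul : ∀ x y : ℚ_[p], ‖x‖ = 1 → ‖y‖ = 1 → χ (x * y) = χ x * χ y)
    (hχ_cond : ∀ x : ℚ_[p], ‖x - 1‖ ≤ (p : ℝ) ^ (-(N : ℤ)) → χ x = 1)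
    {h u : ℚ_[p]} (hh : ‖h‖ ≤ (p : ℝ) ^ (-(N : ℤ))) (hu : ‖u‖ = 1) :
    χ (h + u) = χ u := by
  have hu0 : u ≠ 0 := norm_ne_zero_iff.mp (hu ▸ one_ne_zero)
  have hsmall : ‖u⁻¹ * h‖ ≤ (p : ℝ) ^ (-(N : ℤ)) := by
    rwa [norm_mul, norm_inv, hu, inv_one, one_mul]
  have hlt : ‖(1 + u⁻¹ * h) - 1‖ < 1 := by
    rw [add_sub_cancel_left]
    exact hsmall.trans_lt (zpow_lt_one_of_neg₀ one_lt_prime (by omega))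
  have hsplit : h + u = u * (1 + u⁻¹ * h) := by field_simp; ring
  rw [hsplit, hχ_mul u _ hu (norm_eq_one_of_norm_sub_one_lt hlt),
    hχ_cond (1 + u⁻¹ * h) (by rwa [add_sub_cancel_left]), mul_one]

theorem zpow_add_one_le_norm {x : ℚ_[p]} {N : ℕ} (hx : x = 0 ∨ x.valuation ≠ -(N : ℤ))
    (hlt : (p : ℝ) ^ ((N : ℤ) - 1) < ‖x‖) : (p : ℝ) ^ ((N : ℤ) + 1) ≤ ‖x‖ := by
  have hx0 : x ≠ 0 := norm_pos_iff.mp ((zpow_pos prime_pos _).trans hlt)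
  have hval := hx.resolve_left hx0
  rw [norm_eq_zpow_neg_valuation hx0] at hlt ⊢
  have := (zpow_lt_zpow_iff_right₀ one_lt_prime).mp hlt
  exact zpow_le_zpow_right₀ one_lt_prime.le (by omega)

variable [MeasurableSpace ℚ_[p]] [BorelSpace ℚ_[p]] {μ : Measure ℚ_[p]} {ψ χ : ℚ_[p] → ℂ}
  {N : ℕ} {x : ℚ_[p]}

theorem measurableSet_norm_eq_one : MeasurableSet {y : ℚ_[p] | ‖y‖ = 1} :=
  (isClosed_eq continuous_norm continuous_const).measurableSet

theorem setIntegral_norm_eq_one_eq_zero_of_norm_le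
    (hμ_inv : ∀ a : ℚ_[p], Measure.map (fun x => a + x) μ = μ)
    (hμ_int : μ {x : ℚ_[p] | ‖x‖ ≤ 1} = 1)
    (hψ_add : ∀ x y : ℚ_[p], ψ (x + y) = ψ x * ψ y)
    (hψ_triv : ∀ x : ℚ_[p], ‖x‖ ≤ 1 → ψ x = 1)
    (hχ_mul : ∀ x y : ℚ_[p], ‖x‖ = 1 → ‖y‖ = 1 → χ (x * y) = χ x * χ y)
    (hχ_nontriv : ∃ x : ℚ_[p], ‖x‖ = 1 ∧ χ x ≠ 1)
    (hχ_min : ∀ M : ℕ, 1 ≤ M →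
      (∀ x : ℚ_[p], ‖x - 1‖ ≤ (p : ℝ) ^ (-(M : ℤ)) → χ x = 1) → N ≤ M)
    (hx : ‖x‖ ≤ (p : ℝ) ^ ((N : ℤ) - 1)) :
    ∫ u in {y : ℚ_[p] | ‖y‖ = 1}, χ u * ψ (x * u) ∂μ = 0 := by
  obtain ⟨t, ht, htN, hχt⟩ := exists_norm_sub_one_le_apply_ne_one hχ_nontriv hχ_min
  have : μ.IsAddLeftInvariant := ⟨hμ_inv⟩
  have hball : closedBall (0 : ℚ_[p]) 1 = {x | ‖x‖ ≤ 1} := by ext; simp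
  have hmap : MeasurePreserving (t * ·) μ μ :=
    ⟨measurable_const_mul t, map_mul_left_eq_self_of_norm_eq_one (by simp [hball, hμ_int])
      (by simp [hball, hμ_int]) ht⟩
  refine setIntegral_eq_zero_of_comp_eq_mul (MeasurableEquiv.mulLeft₀ t
    (norm_ne_zero_iff.mp (ht ▸ one_ne_zero))) hmap measurableSet_norm_eq_one
    (by ext; simp [ht]) hχt fun u (hu : ‖u‖ = 1) => ?_
  have hψ1 : ψ (x * (t - 1) * u) = 1 := by
    refine hψ_triv _ ?_
    calc ‖x * (t - 1) * u‖ = ‖x‖ * ‖t - 1‖ := by rw [norm_mul, norm_mul, hu, mul_one]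
      _ ≤ (p : ℝ) ^ ((N : ℤ) - 1) * (p : ℝ) ^ (1 - (N : ℤ)) :=
        mul_le_mul hx htN (norm_nonneg _) (zpow_pos prime_pos _).le
      _ = 1 := by rw [← zpow_add₀ prime_pos.ne', sub_add_sub_cancel', sub_self, zpow_zero]
  change χ (t * u) * ψ (x * (t * u)) = χ t * (χ u * ψ (x * u))
  rw [hχ_mul t u ht hu, show x * (t * u) = x * u + x * (t - 1) * u by ring, hψ_add, hψ1]
  ring

theorem setIntegral_norm_eq_one_eq_zero_of_le_norm
    (hμ_inv : ∀ a : ℚ_[p], Measure.map (fun x => a + x) μ = μ)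
    (hψ_add : ∀ x y : ℚ_[p], ψ (x + y) = ψ x * ψ y)
    (hψ_nontriv : ∃ x : ℚ_[p], ‖x‖ ≤ p ∧ ψ x ≠ 1)
    (hχ_mul : ∀ x y : ℚ_[p], ‖x‖ = 1 → ‖y‖ = 1 → χ (x * y) = χ x * χ y)
    (hN : 1 ≤ N)
    (hχ_cond : ∀ x : ℚ_[p], ‖x - 1‖ ≤ (p : ℝ) ^ (-(N : ℤ)) → χ x = 1)
    (hx : (p : ℝ) ^ ((N : ℤ) + 1) ≤ ‖x‖) :
    ∫ u in {y : ℚ_[p] | ‖y‖ = 1}, χ u * ψ (x * u) ∂μ = 0 := by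
  obtain ⟨x₀, hx₀, hψx₀⟩ := hψ_nontriv
  have hx0 : x ≠ 0 := norm_pos_iff.mp ((zpow_pos prime_pos _).trans_le hx)
  have hh : ‖x₀ / x‖ ≤ (p : ℝ) ^ (-(N : ℤ)) := calc
    ‖x₀ / x‖ ≤ (p : ℝ) ^ (1 : ℤ) / (p : ℝ) ^ ((N : ℤ) + 1) := by
      rw [norm_div]
      exact div_le_div₀ (zpow_pos prime_pos _).le (by simpa using hx₀) (zpow_pos prime_pos _) hx
    _ = (p : ℝ) ^ (-(N : ℤ)) := by rw [← zpow_sub₀ prime_pos.ne']; ring_nf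
  have hh1 : ‖x₀ / x‖ < 1 := hh.trans_lt (zpow_lt_one_of_neg₀ one_lt_prime (by omega))
  refine setIntegral_eq_zero_of_comp_eq_mul (MeasurableEquiv.addLeft (x₀ / x))
    ⟨measurable_const_add _, hμ_inv _⟩ measurableSet_norm_eq_one
    (Set.ext fun y => norm_add_eq_iff_of_norm_lt hh1) hψx₀ fun u (hu : ‖u‖ = 1) => ?_
  change χ (x₀ / x + u) * ψ (x * (x₀ / x + u)) = ψ x₀ * (χ u * ψ (x * u))
  rw [apply_add_eq_of_norm_le_conductor hN hχ_mul hχ_cond hh hu,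
    show x * (x₀ / x + u) = x₀ + x * u by field_simp, hψ_add]
  ring

end Padic

theorem stmt_4_general (p : ℕ) [Fact p.Prime] [MeasurableSpace ℚ_[p]] [BorelSpace ℚ_[p]]
    (μ : Measure ℚ_[p])
    (hμ_inv : ∀ a : ℚ_[p], Measure.map (fun x => a + x) μ = μ)
    (hμ_int : μ {x : ℚ_[p] | ‖x‖ ≤ 1} = 1)
    (ψ : ℚ_[p] → ℂ)
    (hψ_add : ∀ x y : ℚ_[p], ψ (x + y) = ψ x * ψ y)
    (hψ_triv : ∀ x : ℚ_[p], ‖x‖ ≤ 1 → ψ x = 1)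
    (hψ_nontriv : ∃ x : ℚ_[p], ‖x‖ ≤ p ∧ ψ x ≠ 1)
    (χ : ℚ_[p] → ℂ)
    (hχ_mul : ∀ x y : ℚ_[p], ‖x‖ = 1 → ‖y‖ = 1 → χ (x * y) = χ x * χ y)
    (hχ_nontriv : ∃ x : ℚ_[p], ‖x‖ = 1 ∧ χ x ≠ 1)
    (N : ℕ) (hN : 1 ≤ N)
    (hχ_cond : ∀ x : ℚ_[p], ‖x - 1‖ ≤ (p : ℝ) ^ (-(N : ℤ)) → χ x = 1)
    (hχ_min : ∀ M : ℕ, 1 ≤ M →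
      (∀ x : ℚ_[p], ‖x - 1‖ ≤ (p : ℝ) ^ (-(M : ℤ)) → χ x = 1) → N ≤ M)
    (x : ℚ_[p]) (hx : x = 0 ∨ x.valuation ≠ -(N : ℤ)) :
    ∫ u in {y : ℚ_[p] | ‖y‖ = 1}, χ u * ψ (x * u) ∂μ = 0 := by
  rcases le_or_gt ‖x‖ ((p : ℝ) ^ ((N : ℤ) - 1)) with hsmall | hlarge
  · exact Padic.setIntegral_norm_eq_one_eq_zero_of_norm_le hμ_inv hμ_int hψ_add hψ_triv hχ_mul
      hχ_nontriv hχ_min hsmall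
  · exact Padic.setIntegral_norm_eq_one_eq_zero_of_le_norm hμ_inv hψ_add hψ_nontriv hχ_mul hN
      hχ_cond (Padic.zpow_add_one_le_norm hx hlarge)

/-- **Vanishing of twisted character integrals off the conductor shell.**
Let `μ` be the additive Haar measure on `ℚ_p` with `μ(ℤ_p) = 1`, `ψ` a standard additive
character of `ℚ_p`, and `χ` a nontrivial continuous unitary character of `ℤ_pˣ` with conductor
exponent `N ≥ 1`.  Then for every `x ∈ ℚ_p` with `x = 0` or `v_p(x) ≠ −N`, one has
`∫_{ℤ_pˣ} χ(u) ψ(x u) dμ(u) = 0`. -/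
theorem stmt_4 (p : ℕ) [Fact p.Prime] [MeasurableSpace ℚ_[p]] [BorelSpace ℚ_[p]]
    (μ : Measure ℚ_[p])
    (hμ_inv : ∀ a : ℚ_[p], Measure.map (fun x => a + x) μ = μ)
    (hμ_int : μ {x : ℚ_[p] | ‖x‖ ≤ 1} = 1)
    (ψ : ℚ_[p] → ℂ) (hψ_cont : Continuous ψ)
    (hψ_add : ∀ x y : ℚ_[p], ψ (x + y) = ψ x * ψ y)
    (hψ_norm : ∀ x : ℚ_[p], ‖ψ x‖ = 1)
    (hψ_triv : ∀ x : ℚ_[p], ‖x‖ ≤ 1 → ψ x = 1)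
    (hψ_nontriv : ∃ x : ℚ_[p], ‖x‖ ≤ p ∧ ψ x ≠ 1)
    (χ : ℚ_[p] → ℂ) (hχ_cont : ContinuousOn χ {x : ℚ_[p] | ‖x‖ = 1})
    (hχ_mul : ∀ x y : ℚ_[p], ‖x‖ = 1 → ‖y‖ = 1 → χ (x * y) = χ x * χ y)
    (hχ_norm : ∀ x : ℚ_[p], ‖x‖ = 1 → ‖χ x‖ = 1)
    (hχ_nontriv : ∃ x : ℚ_[p], ‖x‖ = 1 ∧ χ x ≠ 1)
    (N : ℕ) (hN : 1 ≤ N)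
    (hχ_cond : ∀ x : ℚ_[p], ‖x - 1‖ ≤ (p : ℝ) ^ (-(N : ℤ)) → χ x = 1)
    (hχ_min : ∀ M : ℕ, 1 ≤ M →
      (∀ x : ℚ_[p], ‖x - 1‖ ≤ (p : ℝ) ^ (-(M : ℤ)) → χ x = 1) → N ≤ M)
    (x : ℚ_[p]) (hx : x = 0 ∨ x.valuation ≠ -(N : ℤ)) :
    ∫ u in {y : ℚ_[p] | ‖y‖ = 1}, χ u * ψ (x * u) ∂μ = 0 :=
  stmt_4_general p μ hμ_inv hμ_int ψ hψ_add hψ_triv hψ_nontriv χ hχ_mul hχ_nontriv N hN hχ_cond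
    hχ_min x hx
end

section
/- (Lemma 6.3, abstract form.) Let δ₀ > 0 and let g : ℝ → ℂ belong to L¹(ℝ) ∩ L²(ℝ). Define E_g : (0, ∞) → ℂ by E_g(y) = (1/(2π)) ∫_ℝ g(η) · y^{δ₀ + iη} dη. Then for every x > 0, ∫_0^x |E_g(t)|² dt ≤ (1/(2π)) (∫_ℝ |g(η)|² dη) · x^{2δ₀ + 1}. -/
open MeasureTheory Real

/-- The Mellin-type transform `E_g(y) = (1/(2π)) ∫_ℝ g(η) y^{δ₀ + iη} dη` for `y > 0`,
where `y^{δ₀+iη} := exp((δ₀ + iη) log y)`. -/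
noncomputable def mellinE (δ₀ : ℝ) (g : ℝ → ℂ) (y : ℝ) : ℂ :=
  (1 / (2 * π)) * ∫ η : ℝ, g η * Complex.exp (((δ₀ : ℂ) + (η : ℂ) * Complex.I) * Real.log y)

/-!
Substituting `t = eᵘ` turns `E_g(eᵘ)` into `(2π)⁻¹ e^{δ₀u}` times the Fourier transform `ĝ` of `g`
at `-u/(2π)`, so `∫₀ˣ |E_g|²` becomes a weighted `L²` norm of `ĝ` over `u ≤ log x`, with weight
`e^{(2δ₀+1)u} ≤ x^{2δ₀+1}`. Plancherel's theorem then bounds it by `2π ∫ |g|²`. For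
`g ∈ L¹ ∩ L²` this follows from the isometry of the `L²` Fourier transform once the latter is
identified with the Fourier integral of `g`, which holds because both define the same tempered
distribution.
-/

open FourierTransform

theorem MeasureTheory.L2.norm_sq_eq_integral_norm_sq {α F : Type*} [MeasurableSpace α]
    {μ : Measure α} [NormedAddCommGroup F] [InnerProductSpace ℂ F] (u : Lp F 2 μ) :
    ‖u‖ ^ 2 = ∫ x, ‖u x‖ ^ 2 ∂μ := by
  have h := congr_arg RCLike.re (@L2.inner_def α F ℂ _ _ _ _ _ u u)
  rw [← integral_re (L2.integrable_inner u u)] at h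
  simpa only [← norm_sq_eq_re_inner] using h

section Plancherel

open SchwartzMap

variable {V F : Type*} [NormedAddCommGroup V] [InnerProductSpace ℝ V] [FiniteDimensional ℝ V]
  [MeasurableSpace V] [BorelSpace V] [NormedAddCommGroup F] [InnerProductSpace ℂ F]

theorem Real.continuous_fourier_of_integrable {f : V → F} (hf : Integrable f) :
    Continuous (𝓕 f) :=
  VectorFourier.fourierIntegral_continuous Real.continuous_fourierChar
    (innerSL ℝ).continuous₂ hf

variable [CompleteSpace F]

theorem Real.integral_fourier_smul_eq {φ : V → ℂ} {f : V → F} (hφ : Integrable φ)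
    (hf : Integrable f) : ∫ x, 𝓕 φ x • f x = ∫ x, φ x • 𝓕 f x := by
  have := VectorFourier.integral_fourierIntegral_smul_eq_flip (L := innerₗ V)
    Real.continuous_fourierChar continuous_inner hφ hf
  rw [flip_innerₗ] at this
  exact this

theorem MeasureTheory.MemLp.fourier_toLp_ae_eq {f : V → F} (hf1 : Integrable f)
    (hf2 : MemLp f 2) :
    ((𝓕 (hf2.toLp f) : Lp F 2 (volume : Measure V)) : V → F) =ᵐ[volume] 𝓕 f := by
  refine ae_eq_of_integral_contDiff_smul_eq ((Lp.memLp _).locallyIntegrable (p := 2) (by norm_num))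
    (Real.continuous_fourier_of_integrable hf1).locallyIntegrable fun φ hφ hφc => ?_
  let ψ : 𝓢(V, ℂ) := (hφc.comp_left (g := Complex.ofRealCLM) rfl).toSchwartzMap
    (Complex.ofRealCLM.contDiff.comp hφ)
  calc ∫ x, φ x • ((𝓕 (hf2.toLp f) : Lp F 2 (volume : Measure V)) : V → F) x
      = Lp.toTemperedDistribution (𝓕 (hf2.toLp f)) ψ := by
        simp [ψ, Complex.coe_smul]
    _ = 𝓕 (Lp.toTemperedDistribution (hf2.toLp f)) ψ := by
        rw [Lp.fourier_toTemperedDistribution_eq]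
    _ = ∫ x, 𝓕 ψ x • f x := by
        rw [TemperedDistribution.fourier_apply, Lp.toTemperedDistribution_apply]
        exact integral_congr_ae (hf2.coeFn_toLp.mono fun x hx => by simp only [hx])
    _ = ∫ x, φ x • 𝓕 f x := by
        rw [fourier_coe, Real.integral_fourier_smul_eq ψ.integrable hf1]
        simp [ψ, Complex.coe_smul]

theorem Real.memLp_two_fourier {f : V → F} (hf1 : Integrable f) (hf2 : MemLp f 2) :
    MemLp (𝓕 f) 2 :=
  (Lp.memLp _).ae_eq (hf2.fourier_toLp_ae_eq hf1)

theorem Real.integral_norm_sq_fourier {f : V → F} (hf1 : Integrable f) (hf2 : MemLp f 2) :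
    ∫ ξ, ‖𝓕 f ξ‖ ^ 2 = ∫ x, ‖f x‖ ^ 2 := by
  calc ∫ ξ, ‖𝓕 f ξ‖ ^ 2
      = ∫ ξ, ‖((𝓕 (hf2.toLp f) : Lp F 2 (volume : Measure V)) : V → F) ξ‖ ^ 2 :=
        integral_congr_ae ((hf2.fourier_toLp_ae_eq hf1).mono fun ξ h => by simp only [h])
    _ = ‖hf2.toLp f‖ ^ 2 := by
        rw [← L2.norm_sq_eq_integral_norm_sq, Lp.norm_fourier_eq]
    _ = ∫ x, ‖f x‖ ^ 2 := by
        rw [L2.norm_sq_eq_integral_norm_sq]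
        exact integral_congr_ae (hf2.coeFn_toLp.mono fun x h => by simp only [h])

end Plancherel

theorem integral_comp_exp_Iic {E : Type*} [NormedAddCommGroup E] [NormedSpace ℝ E]
    (g : ℝ → E) (a : ℝ) :
    ∫ x in Set.Iic a, exp x • g (exp x) = ∫ y in Set.Ioc 0 (exp a), g y := by
  symm; rw [← image_exp_Iic]
  simpa [abs_of_pos (exp_pos _)] using integral_image_eq_integral_abs_deriv_smul
      (measurableSet_Iic (a := a)) (fun x _ ↦ (hasDerivAt_exp x).hasDerivWithinAt)
      (fun x _ y _ hxy ↦ exp_injective hxy) g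

theorem setIntegral_Iic_exp_mul_le {h : ℝ → ℝ} (hh : Integrable h) (hh0 : 0 ≤ h) {a : ℝ}
    (ha : 0 ≤ a) (L : ℝ) :
    ∫ u in Set.Iic L, exp (a * u) * h u ≤ exp (a * L) * ∫ u, h u := by
  calc ∫ u in Set.Iic L, exp (a * u) * h u
      ≤ ∫ u in Set.Iic L, exp (a * L) * h u := by
        refine integral_mono_of_nonneg (.of_forall fun u => mul_nonneg (exp_pos _).le (hh0 u))
          (hh.const_mul _).integrableOn (ae_restrict_of_forall_mem measurableSet_Iic fun u hu =>
            mul_le_mul_of_nonneg_right (exp_le_exp.2 (mul_le_mul_of_nonneg_left hu ha)) (hh0 u))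
    _ ≤ exp (a * L) * ∫ u, h u := by
        rw [integral_const_mul]
        exact mul_le_mul_of_nonneg_left (setIntegral_le_integral hh (.of_forall hh0))
          (exp_pos _).le

theorem mellinE_exp (δ₀ : ℝ) (g : ℝ → ℂ) (u : ℝ) :
    mellinE δ₀ g (exp u) = ((2 * π)⁻¹ * exp (δ₀ * u) : ℝ) * 𝓕 g (u / -(2 * π)) := by
  rw [mellinE, log_exp, Real.fourier_real_eq_integral_exp_smul, ← integral_const_mul,
    ← integral_const_mul]
  congr 1; ext η
  have : (-2 * π * η * (u / -(2 * π)) : ℝ) = η * u := by field_simp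
  rw [this, smul_eq_mul]
  push_cast
  rw [show ((δ₀ : ℂ) + η * Complex.I) * u = δ₀ * u + η * u * Complex.I by ring, Complex.exp_add]
  ring

/-- **Lemma 6.3, abstract form.**
For `δ₀ > 0` and `g ∈ L¹(ℝ) ∩ L²(ℝ)`, for every `x > 0`,
`∫_0^x |E_g(t)|² dt ≤ (1/(2π)) (∫_ℝ |g(η)|² dη) · x^{2δ₀+1}`. -/
theorem stmt_10 (δ₀ : ℝ) (hδ₀ : 0 < δ₀) (g : ℝ → ℂ)
    (hg1 : Integrable g) (hg2 : MemLp g 2 (volume : Measure ℝ)) :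
    ∀ x : ℝ, 0 < x →
      ∫ t in Set.Ioc (0 : ℝ) x, ‖mellinE δ₀ g t‖ ^ 2 ≤
        (1 / (2 * π)) * (∫ η : ℝ, ‖g η‖ ^ 2) * x ^ (2 * δ₀ + 1) := by
  intro x hx
  have hc : -(2 * π) ≠ 0 := by simp [pi_ne_zero]
  have hF : Integrable fun u => ‖𝓕 g (u / -(2 * π))‖ ^ 2 :=
    ((Real.memLp_two_fourier hg1 hg2).integrable_norm_pow two_ne_zero).comp_div hc
  calc ∫ t in Set.Ioc 0 x, ‖mellinE δ₀ g t‖ ^ 2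
      = ∫ u in Set.Iic (log x), exp u * ‖mellinE δ₀ g (exp u)‖ ^ 2 := by
        rw [← exp_log hx, ← integral_comp_exp_Iic, log_exp]; rfl
    _ = (2 * π)⁻¹ ^ 2 * ∫ u in Set.Iic (log x),
          exp ((2 * δ₀ + 1) * u) * ‖𝓕 g (u / -(2 * π))‖ ^ 2 := by
        rw [← integral_const_mul]
        congr 1; ext u
        rw [mellinE_exp, norm_mul, Complex.norm_real, norm_of_nonneg (by positivity),
          show (2 * δ₀ + 1) * u = δ₀ * u + δ₀ * u + u by ring, exp_add, exp_add]
        ring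
    _ ≤ (2 * π)⁻¹ ^ 2 * (exp ((2 * δ₀ + 1) * log x) * ∫ u, ‖𝓕 g (u / -(2 * π))‖ ^ 2) := by
        gcongr
        exact setIntegral_Iic_exp_mul_le hF (fun u => by positivity) (by linarith) _
    _ = 1 / (2 * π) * (∫ η, ‖g η‖ ^ 2) * x ^ (2 * δ₀ + 1) := by
        rw [Measure.integral_comp_div (fun w => ‖𝓕 g w‖ ^ 2),
          Real.integral_norm_sq_fourier hg1 hg2, rpow_def_of_pos hx, mul_comm (log x), abs_neg,
          abs_of_pos two_pi_pos, smul_eq_mul]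
        field_simp
end

section
/- (Theorem 6.2, abstract Tauberian form.) Let 0 < δ₀ < 1, let E : (0, ∞) → ℝ be measurable, and suppose: (i) there is C₁ > 0 such that ∫_0^x E(t)² dt ≤ C₁ · x^{2δ₀+1} for all x > 0; and (ii) there are A, B ∈ ℝ such that the function x ↦ E(x) + x·(A·log x + B) is nondecreasing on [3, ∞). Then there is a constant C > 0 such that |E(x)| ≤ C · x^{(2δ₀+1)/3} · log x for all x ≥ 3. -/
/-!
Write `g x = x * (A * log x + B)`, so that `E + g` is nondecreasing while `g` varies by
`O(h log x)` on windows of length `h` near `x`. For large `x` take `h = x ^ ((2δ₀ + 1) / 3)`.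
Monotonicity bounds `E x` above by `E t + O(h log x)` for `t ∈ (x, x + h]` and below by
`E t - O(h log x)` for `t ∈ (x - h, x]`; averaging over the window and applying Cauchy–Schwarz
to the `L²` bound, the mean of `|E|` there is at most `√(C₁ (2x)^(2δ₀+1) / h) = O(h)`.
This choice of `h` balances the two errors. On the remaining compact range `E` is bounded,
being a monotone function minus a continuous one.
-/

open MeasureTheory Real Set Filter
open scoped ENNReal

theorem lintegral_ofReal_abs_le_sqrt_lintegral_sq {α : Type*} [MeasurableSpace α]
    {μ : Measure α} {f : α → ℝ} (hf : AEMeasurable f μ) :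
    ∫⁻ x, ENNReal.ofReal |f x| ∂μ ≤
      (∫⁻ x, ENNReal.ofReal (f x ^ 2) ∂μ) ^ (1 / 2 : ℝ) * μ univ ^ (1 / 2 : ℝ) := by
  have hsq (x : α) : ENNReal.ofReal |f x| ^ (2 : ℝ) = ENNReal.ofReal (f x ^ 2) := by
    rw [ENNReal.ofReal_rpow_of_nonneg (abs_nonneg _) zero_le_two, Real.rpow_two, sq_abs]
  simpa [hsq] using ENNReal.lintegral_mul_le_Lp_mul_Lq μ HolderConjugate.two_two
    hf.abs.ennreal_ofReal (aemeasurable_const (b := (1 : ℝ≥0∞)))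

theorem integrable_and_integral_abs_le_of_lintegral_sq_le {α : Type*} [MeasurableSpace α]
    {μ : Measure α} [IsFiniteMeasure μ] {f : α → ℝ} (hf : AEStronglyMeasurable f μ) {M : ℝ}
    (hM : 0 ≤ M) (hL : ∫⁻ x, ENNReal.ofReal (f x ^ 2) ∂μ ≤ ENNReal.ofReal M) :
    Integrable f μ ∧ ∫ x, |f x| ∂μ ≤ √M * √(μ.real univ) := by
  have key : ∫⁻ x, ENNReal.ofReal |f x| ∂μ ≤ ENNReal.ofReal (√M * √(μ.real univ)) := by
    refine (lintegral_ofReal_abs_le_sqrt_lintegral_sq hf.aemeasurable).trans ?_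
    rw [ENNReal.ofReal_mul (sqrt_nonneg _), sqrt_eq_rpow, sqrt_eq_rpow,
      ← ENNReal.ofReal_rpow_of_nonneg hM (by norm_num),
      ← ENNReal.ofReal_rpow_of_nonneg measureReal_nonneg (by norm_num), ofReal_measureReal]
    gcongr
  have hint : Integrable f μ :=
    ⟨hf, (hasFiniteIntegral_iff_norm f).2 (key.trans_lt ENNReal.ofReal_lt_top)⟩
  refine ⟨hint, ?_⟩
  rw [integral_eq_lintegral_of_nonneg_ae (.of_forall fun x => abs_nonneg _) hint.abs.1]
  exact ENNReal.toReal_le_of_le_ofReal (by positivity) key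

theorem le_add_sqrt_div_of_lintegral_sq_le {E : ℝ → ℝ} (hE : Measurable E) {a h c D M : ℝ}
    (hh : 0 < h) (hM : 0 ≤ M)
    (hL : ∫⁻ t in Ioc a (a + h), ENNReal.ofReal (E t ^ 2) ≤ ENNReal.ofReal M)
    (hc : ∀ t ∈ Ioc a (a + h), c ≤ E t + D) :
    c ≤ D + √(M / h) := by
  have hvol : volume.real (Ioc a (a + h)) = h := by simp [hh.le]
  obtain ⟨hint, habs⟩ :=
    integrable_and_integral_abs_le_of_lintegral_sq_le hE.aestronglyMeasurable hM hL
  rw [measureReal_restrict_apply_univ, hvol] at habs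
  have hmean : (c - D) * h ≤ ∫ t in Ioc a (a + h), E t := by
    simpa [hvol] using setIntegral_ge_of_const_le_real measurableSet_Ioc (by simp)
      (fun t ht => sub_le_iff_le_add.2 (hc t ht)) hint
  have hE_le_abs : ∫ t in Ioc a (a + h), E t ≤ ∫ t in Ioc a (a + h), |E t| :=
    integral_mono hint hint.abs fun t => le_abs_self _
  have hsqrt : √M * √h = √(M / h) * h := by
    rw [sqrt_div' _ hh.le]
    field_simp
    rw [sq_sqrt hh.le]
  have hmul : (c - D) * h ≤ √(M / h) * h := by linarith
  linarith [le_of_mul_le_mul_right hmul hh]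

theorem abs_mul_log_add_sub_le (A B : ℝ) {s t : ℝ} (hs : 0 < s) (hst : s ≤ t) (ht : 1 ≤ t) :
    |t * (A * log t + B) - s * (A * log s + B)| ≤ (t - s) * (|A| * log t + |A| + |B|) := by
  have hlog_t : 0 ≤ log t := log_nonneg ht
  have hlog_sub : 0 ≤ log t - log s := sub_nonneg.2 (log_le_log hs hst)
  have hlog_sub_le : s * (log t - log s) ≤ t - s := by
    have := log_le_sub_one_of_pos (div_pos (hs.trans_le hst) hs)
    rw [log_div (hs.trans_le hst).ne' hs.ne'] at this
    calc s * (log t - log s) ≤ s * (t / s - 1) := by gcongr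
      _ = t - s := by field_simp
  have hlin : |A * log t + B| ≤ |A| * log t + |B| := by
    simpa [abs_mul, abs_of_nonneg hlog_t] using abs_add_le (A * log t) B
  calc |t * (A * log t + B) - s * (A * log s + B)|
      = |(t - s) * (A * log t + B) + A * (s * (log t - log s))| := by ring_nf
    _ ≤ (t - s) * (|A| * log t + |B|) + |A| * (t - s) := by
      refine (abs_add_le _ _).trans (add_le_add ?_ ?_)
      · rw [abs_mul, abs_of_nonneg (sub_nonneg.2 hst)]
        gcongr
      · rw [abs_mul, abs_of_nonneg (mul_nonneg hs.le hlog_sub)]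
        gcongr
    _ = (t - s) * (|A| * log t + |A| + |B|) := by ring

theorem eventually_rpow_le_half {β : ℝ} (hβ : β < 1) : ∀ᶠ x : ℝ in atTop, x ^ β ≤ x / 2 := by
  filter_upwards [(tendsto_rpow_atTop (sub_pos.2 hβ)).eventually_ge_atTop 2,
    eventually_gt_atTop 0] with x hx hx0
  have : x ^ β * 2 ≤ x ^ β * x ^ (1 - β) := by gcongr
  rw [← rpow_add hx0, add_sub_cancel, rpow_one] at this
  linarith

theorem exists_bound_Icc_of_monotoneOn_add {E g : ℝ → ℝ} {a b : ℝ}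
    (hF : MonotoneOn (fun x => E x + g x) (Icc a b)) (hg : ContinuousOn g (Icc a b)) :
    ∃ C, ∀ x ∈ Icc a b, |E x| ≤ C := by
  obtain ⟨K, hK⟩ := isCompact_Icc.exists_bound_of_continuousOn hg
  refine ⟨|E a + g a| + |E b + g b| + K, fun x hx => ?_⟩
  have ha : a ∈ Icc a b := ⟨le_rfl, hx.1.trans hx.2⟩
  have hb : b ∈ Icc a b := ⟨hx.1.trans hx.2, le_rfl⟩
  have hlo := hF ha hx hx.1
  have hhi := hF hx hb hx.2
  have hgx := hK x hx
  rw [Real.norm_eq_abs] at hgx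
  rw [abs_le] at hgx ⊢
  constructor <;> linarith [le_abs_self (E b + g b), neg_abs_le (E a + g a),
    abs_nonneg (E a + g a), abs_nonneg (E b + g b)]

theorem exists_pos_forall_Ici_le_of_le {E ψ : ℝ → ℝ} {a X C₀ C₁ : ℝ}
    (hψ : ∀ x, a ≤ x → 1 ≤ ψ x) (hsmall : ∀ x ∈ Icc a X, |E x| ≤ C₀)
    (hlarge : ∀ x, X ≤ x → |E x| ≤ C₁ * ψ x) :
    ∃ C, 0 < C ∧ ∀ x, a ≤ x → |E x| ≤ C * ψ x := by
  refine ⟨|C₀| + |C₁| + 1, by positivity, fun x hx => ?_⟩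
  have hψx := hψ x hx
  rcases le_total x X with hxX | hXx
  · calc |E x| ≤ |C₀| := (hsmall x ⟨hx, hxX⟩).trans (le_abs_self _)
      _ ≤ (|C₀| + |C₁| + 1) * 1 := by linarith [abs_nonneg C₁]
      _ ≤ (|C₀| + |C₁| + 1) * ψ x := by gcongr
  · calc |E x| ≤ C₁ * ψ x := hlarge x hXx
      _ ≤ (|C₀| + |C₁| + 1) * ψ x := by
        gcongr
        linarith [le_abs_self C₁, abs_nonneg C₀]

theorem one_le_log_of_three_le {x : ℝ} (hx : 3 ≤ x) : 1 ≤ log x :=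
  (le_log_iff_exp_le (by linarith)).2 (exp_one_lt_d9.le.trans (by norm_num; linarith))

theorem abs_mul_log_add_sub_le_mul_log (A B : ℝ) {x s t : ℝ} (hx : 3 ≤ x) (hs : 1 ≤ s)
    (hst : s ≤ t) (ht : t ≤ 2 * x) :
    |t * (A * log t + B) - s * (A * log s + B)| ≤ (t - s) * ((3 * |A| + |B|) * log x) := by
  refine (abs_mul_log_add_sub_le A B (by linarith) hst (by linarith)).trans ?_
  have hlog := one_le_log_of_three_le hx
  have hlog_t : log t ≤ 2 * log x := by
    refine (log_le_log (by linarith) ht).trans ?_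
    rw [log_mul two_ne_zero (by linarith)]
    linarith [log_two_lt_d9]
  gcongr
  nlinarith [abs_nonneg A, abs_nonneg B]

theorem sqrt_mul_rpow_two_mul_div_rpow (C p : ℝ) {x : ℝ} (hx : 0 < x) :
    √(C * (2 * x) ^ p / x ^ (p / 3)) = √(C * 2 ^ p) * x ^ (p / 3) := by
  have hh : 0 < x ^ (p / 3) := rpow_pos_of_pos hx _
  have hxp : x ^ p = (x ^ (p / 3)) ^ 3 := by
    rw [← rpow_mul_natCast hx.le]
    norm_num
  rw [mul_rpow zero_le_two hx.le, hxp,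
    show C * (2 ^ p * (x ^ (p / 3)) ^ 3) / x ^ (p / 3) = C * 2 ^ p * (x ^ (p / 3)) ^ 2 by
      field_simp,
    sqrt_mul' _ (sq_nonneg _), sqrt_sq hh.le]

theorem abs_le_of_lintegral_sq_le_of_monotoneOn {E : ℝ → ℝ} (hE : Measurable E)
    {p C₁ A B x : ℝ} (hC₁ : 0 ≤ C₁)
    (hL2 : ∀ y : ℝ, 0 < y →
      ∫⁻ t in Ioc 0 y, ENNReal.ofReal (E t ^ 2) ≤ ENNReal.ofReal (C₁ * y ^ p))
    (hmono : MonotoneOn (fun x => E x + x * (A * log x + B)) (Ici 3))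
    (hx : 6 ≤ x) (hhalf : x ^ (p / 3) ≤ x / 2) :
    |E x| ≤ (√(C₁ * 2 ^ p) + (3 * |A| + |B|)) * x ^ (p / 3) * log x := by
  set h := x ^ (p / 3)
  set K := 3 * |A| + |B|
  have hx0 : 0 < x := by linarith
  have hh : 0 < h := rpow_pos_of_pos hx0 _
  have hlog : 1 ≤ log x := one_le_log_of_three_le (by linarith)
  have hdrift : ∀ s t, x - h ≤ s → s ≤ t → t ≤ s + h → t ≤ 2 * x →
      |t * (A * log t + B) - s * (A * log s + B)| ≤ h * (K * log x) :=
    fun s t hs hst hts ht => (abs_mul_log_add_sub_le_mul_log A B (by linarith) (by linarith) hst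
      ht).trans (mul_le_mul_of_nonneg_right (by linarith) (by positivity))
  have hL : ∀ a, 0 < a → a + h ≤ 2 * x →
      ∫⁻ t in Ioc a (a + h), ENNReal.ofReal (E t ^ 2) ≤ ENNReal.ofReal (C₁ * (2 * x) ^ p) :=
    fun a ha hax => (lintegral_mono_set (Ioc_subset_Ioc ha.le hax)).trans (hL2 _ (by linarith))
  have hsqrt := sqrt_mul_rpow_two_mul_div_rpow C₁ p hx0
  have hM : 0 ≤ C₁ * (2 * x) ^ p := by positivity
  have hupper : E x ≤ h * (K * log x) + √(C₁ * 2 ^ p) * h := by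
    rw [← hsqrt]
    refine le_add_sqrt_div_of_lintegral_sq_le hE hh hM (hL x hx0 (by linarith)) fun t ht => ?_
    have hF := hmono (show x ∈ Ici 3 by simp; linarith) (show t ∈ Ici 3 by simp; linarith [ht.1])
      ht.1.le
    have hdiff := le_abs_self (t * (A * log t + B) - x * (A * log x + B))
    have hdiff_le := hdrift x t (by linarith) ht.1.le ht.2 (by linarith [ht.2])
    simp only at hF
    linarith
  have hlower : -E x ≤ h * (K * log x) + √(C₁ * 2 ^ p) * h := by
    rw [← hsqrt]
    refine le_add_sqrt_div_of_lintegral_sq_le hE.neg hh hM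
      (by simpa only [Pi.neg_apply, neg_sq] using hL (x - h) (by linarith) (by linarith))
      fun t ht => ?_
    rw [sub_add_cancel] at ht
    have hF := hmono (show t ∈ Ici 3 by simp; linarith [ht.1]) (show x ∈ Ici 3 by simp; linarith)
      ht.2
    have hdiff := le_abs_self (x * (A * log x + B) - t * (A * log t + B))
    have hdiff_le := hdrift t x ht.1.le ht.2 (by linarith [ht.1]) (by linarith)
    simp only [Pi.neg_apply] at hF ⊢
    linarith
  have hsqrt_le : √(C₁ * 2 ^ p) * h ≤ √(C₁ * 2 ^ p) * h * log x :=
    le_mul_of_one_le_right (by positivity) hlog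
  have hsplit : (√(C₁ * 2 ^ p) + K) * h * log x = √(C₁ * 2 ^ p) * h * log x + h * (K * log x) := by
    ring
  exact abs_le.2 ⟨by linarith, by linarith⟩

/-- **Theorem 6.2, abstract Tauberian form.**
Let `0 < δ₀ < 1` and let `E : (0,∞) → ℝ` be measurable with
(i) `∫_0^x E(t)² dt ≤ C₁ x^{2δ₀+1}` for all `x > 0` (some `C₁ > 0`), and
(ii) `x ↦ E(x) + x(A log x + B)` nondecreasing on `[3, ∞)` for some `A, B ∈ ℝ`.
Then there is `C > 0` with `|E(x)| ≤ C x^{(2δ₀+1)/3} log x` for all `x ≥ 3`. -/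
theorem stmt_11 (δ₀ : ℝ) (hδ₀ : 0 < δ₀) (hδ₀' : δ₀ < 1)
    (E : ℝ → ℝ) (hE : Measurable E)
    (C₁ : ℝ) (hC₁ : 0 < C₁)
    (hL2 : ∀ x : ℝ, 0 < x →
      ∫⁻ t in Set.Ioc (0 : ℝ) x, ENNReal.ofReal (E t ^ 2) ≤
        ENNReal.ofReal (C₁ * x ^ (2 * δ₀ + 1)))
    (A B : ℝ)
    (hmono : MonotoneOn (fun x => E x + x * (A * Real.log x + B)) (Set.Ici (3 : ℝ))) :
    ∃ C : ℝ, 0 < C ∧ ∀ x : ℝ, 3 ≤ x →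
      |E x| ≤ C * x ^ ((2 * δ₀ + 1) / 3) * Real.log x := by
  obtain ⟨X, hX⟩ := eventually_atTop.1
    ((eventually_rpow_le_half (by linarith : (2 * δ₀ + 1) / 3 < 1)).and (eventually_ge_atTop 6))
  have hg : ContinuousOn (fun x => x * (A * log x + B)) (Icc 3 X) := by
    have hne : ∀ x ∈ Icc (3 : ℝ) X, x ≠ 0 := fun x hx => by linarith [hx.1]
    fun_prop (disch := assumption)
  obtain ⟨C₀, hC₀⟩ := exists_bound_Icc_of_monotoneOn_add (hmono.mono Icc_subset_Ici_self) hg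
  have hlarge : ∀ x, X ≤ x → |E x| ≤
      (√(C₁ * 2 ^ (2 * δ₀ + 1)) + (3 * |A| + |B|)) * (x ^ ((2 * δ₀ + 1) / 3) * log x) :=
    fun x hx => by
      rw [← mul_assoc]
      exact abs_le_of_lintegral_sq_le_of_monotoneOn hE hC₁.le hL2 hmono (hX x hx).2 (hX x hx).1
  simp_rw [mul_assoc]
  refine exists_pos_forall_Ici_le_of_le (fun x hx => ?_) hC₀ hlarge
  exact one_le_mul_of_one_le_of_one_le (one_le_rpow (by linarith) (by linarith))
    (one_le_log_of_three_le hx)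
end

section
/- For every w ∈ ℂ with Re(w) > 1, the function x ↦ (1 + x²)^{−w/2} is integrable on ℝ and ∫_ℝ (1 + x²)^{−w/2} dx = √π · Γ((w−1)/2) / Γ(w/2). (This evaluates ∫_{N_v} φ_v at a real archimedean place.) -/
/-!
The integrand is even, so the integral is twice the integral over `(0, ∞)`. There the
substitution `y = x²` gives `½ ∫₀^∞ y^(-1/2) (1 + y)^(-w/2) dy`, and `y = t / (1 - t)` turns this
into the Beta integral `½ B(1/2, (w-1)/2)`; finally `B(a, b) = Γ(a) Γ(b) / Γ(a + b)` and
`Γ(1/2) = √π`.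
-/

open MeasureTheory Real Set

theorem Complex.betaIntegral_eq_integral_Ioi (u v : ℂ) :
    Complex.betaIntegral u v =
      ∫ x in Ioi (0 : ℝ), (x : ℂ) ^ (u - 1) * ((1 + x : ℝ) : ℂ) ^ (-(u + v)) := by
  have hderiv : ∀ t ∈ Ioo (0 : ℝ) 1,
      HasDerivWithinAt (fun t => t / (1 - t)) (1 / (1 - t) ^ 2) (Ioo 0 1) t := by
    intro t ht
    have h1t : 1 - t ≠ 0 := by linarith [ht.2]
    exact (((hasDerivAt_id' t).fun_div ((hasDerivAt_const t 1).fun_sub (hasDerivAt_id' t))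
      h1t).congr_deriv (by ring)).hasDerivWithinAt
  have hinj : InjOn (fun t : ℝ => t / (1 - t)) (Ioo 0 1) := by
    intro a ha b hb hab
    rw [div_eq_div_iff (by linarith [ha.2]) (by linarith [hb.2])] at hab
    linarith
  have himage : (fun t : ℝ => t / (1 - t)) '' Ioo 0 1 = Ioi 0 := by
    ext x
    constructor
    · rintro ⟨t, ht, rfl⟩
      exact div_pos ht.1 (by linarith [ht.2])
    · intro hx
      have hx : 0 < x := hx
      refine ⟨x / (1 + x), ⟨by positivity, (div_lt_one (by positivity)).2 (by linarith)⟩, ?_⟩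
      field_simp
      ring
  rw [← himage, integral_image_eq_integral_abs_deriv_smul measurableSet_Ioo hderiv hinj,
    Complex.betaIntegral, intervalIntegral.integral_of_le zero_le_one,
    integral_Ioc_eq_integral_Ioo]
  refine setIntegral_congr_fun measurableSet_Ioo fun t ⟨ht0, ht1⟩ => ?_
  have h1t : 0 < 1 - t := by linarith
  have hc : ((1 - t : ℝ) : ℂ) ≠ 0 := Complex.ofReal_ne_zero.2 h1t.ne'
  have h1 : 1 + t / (1 - t) = (1 - t)⁻¹ := by field_simp; ring
  have hpow : ((1 - t : ℝ) : ℂ) ^ (u + v) =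
      ((1 - t : ℝ) : ℂ) ^ (u - 1) * ((1 - t : ℝ) : ℂ) ^ (v - 1) * ((1 - t : ℝ) : ℂ) ^ 2 := by
    rw [← Complex.cpow_natCast, ← Complex.cpow_add _ _ hc, ← Complex.cpow_add _ _ hc]
    ring_nf
  have hc' : ((1 - t : ℝ) : ℂ) ^ (u - 1) ≠ 0 := by
    rw [Ne, Complex.cpow_eq_zero_iff]; exact fun h => hc h.1
  simp only [h1, abs_of_pos (by positivity : 0 < 1 / (1 - t) ^ 2), Complex.real_smul,
    Complex.ofReal_div, Complex.ofReal_inv, div_cpow_ofReal_nonneg ht0.le h1t.le,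
    inv_cpow_ofReal_nonneg h1t.le, Complex.cpow_neg, inv_inv, hpow]
  push_cast at hc hc' ⊢
  field_simp

theorem integral_eq_two_smul_integral_Ioi_of_even {E : Type*} [NormedAddCommGroup E]
    [NormedSpace ℝ E] {f : ℝ → E} (hf : Integrable f) (heven : ∀ x, f (-x) = f x) :
    ∫ x, f x = 2 • ∫ x in Ioi 0, f x := by
  have hIic : ∫ x in Iic 0, f x = ∫ x in Ioi 0, f x := by
    have h := integral_comp_neg_Ioi 0 f
    simp only [neg_zero, heven] at h
    exact h.symm
  rw [← intervalIntegral.integral_Iic_add_Ioi hf.integrableOn hf.integrableOn, hIic, two_nsmul]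

theorem integrable_ofReal_one_add_sq_cpow_neg {s : ℂ} (hs : 1 / 2 < s.re) :
    Integrable fun x : ℝ => ((1 + x ^ 2 : ℝ) : ℂ) ^ (-s) := by
  have hcont : Continuous fun x : ℝ => ((1 + x ^ 2 : ℝ) : ℂ) ^ (-s) :=
    Continuous.cpow (by fun_prop) continuous_const
      fun x => Complex.ofReal_mem_slitPlane.2 (by positivity)
  refine (integrable_rpow_neg_one_add_norm_sq (E := ℝ) (μ := volume) (r := 2 * s.re)
    (by rw [Module.finrank_self, Nat.cast_one]; linarith)).mono' hcont.aestronglyMeasurable (.of_forall fun x => le_of_eq ?_)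
  rw [Complex.norm_cpow_eq_rpow_re_of_pos (by positivity), Real.norm_eq_abs, sq_abs,
    Complex.neg_re]
  ring_nf

theorem integral_Ioi_ofReal_one_add_sq_cpow_neg (s : ℂ) :
    ∫ x in Ioi (0 : ℝ), ((1 + x ^ 2 : ℝ) : ℂ) ^ (-s) =
      2⁻¹ * Complex.betaIntegral (1 / 2) (s - 1 / 2) := by
  conv_rhs => rw [Complex.betaIntegral_eq_integral_Ioi, ← integral_comp_rpow_Ioi_of_pos two_pos,
    ← integral_const_mul]
  refine setIntegral_congr_fun measurableSet_Ioi fun x (hx : 0 < x) => ?_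
  have hpow : ((x ^ 2 : ℝ) : ℂ) ^ (1 / 2 - 1 : ℂ) = (x : ℂ)⁻¹ := by
    rw [show (1 / 2 - 1 : ℂ) = ((-(1 / 2) : ℝ) : ℂ) by push_cast; ring,
      ← Complex.ofReal_cpow (by positivity), Real.rpow_neg (by positivity), ← Real.sqrt_eq_rpow,
      Real.sqrt_sq hx.le, Complex.ofReal_inv]
  have hx' : (x : ℂ) ≠ 0 := Complex.ofReal_ne_zero.2 hx.ne'
  simp only [Real.rpow_two, hpow, Complex.real_smul, add_sub_cancel,
    show (2 : ℝ) - 1 = 1 by norm_num, Real.rpow_one]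
  rw [Complex.ofReal_mul, Complex.ofReal_ofNat]
  field_simp

theorem integral_ofReal_one_add_sq_cpow_neg {s : ℂ} (hs : 1 / 2 < s.re) :
    ∫ x : ℝ, ((1 + x ^ 2 : ℝ) : ℂ) ^ (-s) =
      (√π : ℂ) * Complex.Gamma (s - 1 / 2) / Complex.Gamma s := by
  have hΓ : Complex.Gamma (1 / 2) = √π := by
    rw [show (1 / 2 : ℂ) = ((1 / 2 : ℝ) : ℂ) by push_cast; rfl, Complex.Gamma_ofReal,
      Real.Gamma_one_half_eq]
  have hv : 0 < (s - 1 / 2).re := by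
    rw [Complex.sub_re, Complex.div_ofNat_re, Complex.one_re]
    linarith
  rw [integral_eq_two_smul_integral_Ioi_of_even (integrable_ofReal_one_add_sq_cpow_neg hs)
      (fun x => by rw [neg_sq]),
    integral_Ioi_ofReal_one_add_sq_cpow_neg, Complex.betaIntegral_eq_Gamma_mul_div _ _
      (by norm_num) hv, add_sub_cancel, hΓ, two_nsmul]
  ring

/-- **The archimedean integral `∫_{N_v} φ_v` at a real place.**
For `Re(w) > 1`, the function `x ↦ (1 + x²)^{−w/2}` is integrable on `ℝ` and
`∫_ℝ (1 + x²)^{−w/2} dx = √π · Γ((w−1)/2)/Γ(w/2)`. -/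
theorem stmt_13 (w : ℂ) (hw : 1 < w.re) :
    Integrable (fun x : ℝ => ((1 + x ^ 2 : ℝ) : ℂ) ^ (-w / 2)) (volume : Measure ℝ) ∧
    ∫ x : ℝ, ((1 + x ^ 2 : ℝ) : ℂ) ^ (-w / 2) =
      (Real.sqrt π : ℂ) * Complex.Gamma ((w - 1) / 2) / Complex.Gamma (w / 2) := by
  have hs : 1 / 2 < (w / 2).re := by
    rw [Complex.div_ofNat_re]
    linarith
  rw [neg_div, sub_div]
  exact ⟨integrable_ofReal_one_add_sq_cpow_neg hs, integral_ofReal_one_add_sq_cpow_neg hs⟩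
end
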